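/- arXiv:2205.12666 — 2 statements merged into one kernel-verified Lean document; each statement's English description precedes it below -/
import Mathlib

section
/- Let (X,d_X) be a complete extended metric space in which every closed ball of finite radius is compact, and let (Y,d_Y) be any extended metric space. Let H be the set of nonexpansive maps Y → X equipped with the metric D := (d_sup)_ℓ, the intrinsic metric associated to the supremum metric d_sup on H. Then (H,D) is a complete extended metric space, and it is convex: any f,g ∈ H with D(f,g) < ∞ are connected by a 1-Lipschitz curve [0,D(f,g)] → (H,d_sup) with endpoints f and g. -/
open ENNReal NNReal

/-- The space of nonexpansive (`1`-Lipschitz) maps `Y → X` between extended metric spaces. -/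
def NonexpMap (Y X : Type*) [EMetricSpace Y] [EMetricSpace X] : Type _ :=
  {f : Y → X // LipschitzWith 1 f}

/-- The supremum extended metric on the space of nonexpansive maps. -/
noncomputable instance NonexpMap.instEMetricSpace (Y X : Type*) [EMetricSpace Y]
    [EMetricSpace X] : EMetricSpace (NonexpMap Y X) where
  edist f g := ⨆ y : Y, edist (f.1 y) (g.1 y)
  edist_self f := by simp
  edist_comm f g := by simp [edist_comm]
  edist_triangle f g h :=
    iSup_le fun y =>
      le_trans (edist_triangle (f.1 y) (g.1 y) (h.1 y))
        (add_le_add (le_iSup (fun y => edist (f.1 y) (g.1 y)) y)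
          (le_iSup (fun y => edist (g.1 y) (h.1 y)) y))
  eq_of_edist_eq_zero := by
    intro f g h
    refine Subtype.ext (funext fun y => ?_)
    exact eq_of_edist_eq_zero
      (le_antisymm (le_trans (le_iSup (fun y => edist (f.1 y) (g.1 y)) y) h.le) (by simp))

/-- The intrinsic (length) extended distance associated to an extended metric:
the infimum of lengths `ℓ` of `1`-Lipschitz curves `[0, ℓ] → X` joining the two points. -/
noncomputable def intrinsicEDist {X : Type*} [EMetricSpace X] (x x' : X) : ℝ≥0∞ :=
  sInf {L : ℝ≥0∞ | ∃ ℓ : ℝ≥0, L = (ℓ : ℝ≥0∞) ∧ ∃ φ : ℝ → X,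
    LipschitzOnWith 1 φ (Set.Icc 0 (ℓ : ℝ)) ∧ φ 0 = x ∧ φ (ℓ : ℝ) = x'}

/-! Bounded sets of nonexpansive maps `Y → X` are compact for pointwise convergence (Tychonoff),
and the supremum distance is lower semicontinuous under pointwise limits. Hence a family of
`1`-Lipschitz curves in `(H, d_sup)` with a common origin has a pointwise ultralimit which is
again a `1`-Lipschitz curve. Taking limits of almost shortest curves gives, for a `D`-Cauchy
sequence `u`, curves of length `< ε` from `u m` to the pointwise limit of `u`, and for
`D(f, g) < ∞` a curve of length exactly `D(f, g)` from `f` to `g`. -/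

open Filter Set Topology

lemma LipschitzOnWith.lipschitzWith_IccExtend {α : Type*} [PseudoEMetricSpace α] {K : ℝ≥0}
    {f : ℝ → α} {a b : ℝ} (h : a ≤ b) (hf : LipschitzOnWith K f (Icc a b)) :
    LipschitzWith K (IccExtend h ((Icc a b).domRestrict f)) :=
  mul_one K ▸ hf.to_restrict.comp (LipschitzWith.projIcc h)

lemma isCompact_setOf_lipschitzWith_edist_le {Y X : Type*} [PseudoEMetricSpace Y]
    [PseudoEMetricSpace X] (hX : ∀ (x : X) (r : ℝ≥0), IsCompact (Metric.closedEBall x r))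
    (K : ℝ≥0) (a : Y → X) (r : ℝ≥0) :
    IsCompact {f : Y → X | LipschitzWith K f ∧ ∀ y, edist (f y) (a y) ≤ r} := by
  convert (isCompact_univ_pi fun y => hX (a y) r).inter_left
    (isClosed_setOfPred_lipschitzWith K) using 1
  ext f
  simp [Metric.mem_closedEBall]

section intrinsicEDist

variable {X : Type*} [EMetricSpace X]

lemma edist_le_intrinsicEDist (x x' : X) : edist x x' ≤ intrinsicEDist x x' := by
  refine le_sInf ?_
  rintro _ ⟨ℓ, rfl, φ, hφ, rfl, rfl⟩
  simpa [edist_nndist] using hφ (left_mem_Icc.2 ℓ.coe_nonneg) (right_mem_Icc.2 ℓ.coe_nonneg)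

lemma intrinsicEDist_le_of_lipschitzOnWith {φ : ℝ → X} {ℓ : ℝ≥0}
    (hφ : LipschitzOnWith 1 φ (Icc 0 ℓ)) : intrinsicEDist (φ 0) (φ ℓ) ≤ ℓ :=
  sInf_le ⟨ℓ, rfl, φ, hφ, rfl, rfl⟩

lemma exists_lipschitzWith_of_intrinsicEDist_lt {x x' : X} {c : ℝ≥0∞}
    (h : intrinsicEDist x x' < c) :
    ∃ ℓ : ℝ≥0, (ℓ : ℝ≥0∞) < c ∧ ∃ γ : ℝ → X, LipschitzWith 1 γ ∧ γ 0 = x ∧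
      ∀ t, (ℓ : ℝ) ≤ t → γ t = x' := by
  obtain ⟨_, ⟨ℓ, rfl, φ, hφ, rfl, rfl⟩, hℓc⟩ := sInf_lt_iff.1 h
  refine ⟨ℓ, hℓc, _, hφ.lipschitzWith_IccExtend ℓ.coe_nonneg, ?_, fun t ht => ?_⟩
  · simp [IccExtend_left]
  · simp [IccExtend_of_right_le _ _ ht]

end intrinsicEDist

namespace NonexpMap

variable {Y X : Type*} [EMetricSpace Y] [EMetricSpace X]

lemma edist_apply_le (f g : NonexpMap Y X) (y : Y) : edist (f.1 y) (g.1 y) ≤ edist f g :=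
  le_iSup (fun y => edist (f.1 y) (g.1 y)) y

lemma continuous_val : Continuous (fun f : NonexpMap Y X => f.1) :=
  continuous_pi fun y => (LipschitzWith.of_edist_le fun f g => edist_apply_le f g y).continuous

lemma edist_le_of_tendsto {ι : Type*} {l : Filter ι} [l.NeBot] {u v : ι → NonexpMap Y X}
    {f g : NonexpMap Y X} {c : ℝ≥0∞} (hu : Tendsto (fun i => (u i).1) l (𝓝 f.1))
    (hv : Tendsto (fun i => (v i).1) l (𝓝 g.1)) (huv : ∀ᶠ i in l, edist (u i) (v i) ≤ c) :
    edist f g ≤ c :=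
  iSup_le fun y => le_of_tendsto ((tendsto_pi_nhds.1 hu y).edist (tendsto_pi_nhds.1 hv y))
    (huv.mono fun i hi => (edist_apply_le (u i) (v i) y).trans hi)

section

variable (hX : ∀ (x : X) (r : ℝ≥0), IsCompact (Metric.closedEBall x r))
include hX

lemma exists_tendsto_of_eventually_edist_le {ι : Type*}
    (U : Ultrafilter ι) (u : ι → NonexpMap Y X) (a : NonexpMap Y X) (r : ℝ≥0)
    (hr : ∀ᶠ i in U, edist (u i) a ≤ r) :
    ∃ f : NonexpMap Y X, Tendsto (fun i => (u i).1) U (𝓝 f.1) := by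
  have hmem : ∀ᶠ i in U,
      (u i).1 ∈ {f : Y → X | LipschitzWith 1 f ∧ ∀ y, edist (f y) (a.1 y) ≤ r} :=
    hr.mono fun i hi => ⟨(u i).2, fun y => (edist_apply_le _ _ y).trans hi⟩
  obtain ⟨f, ⟨hf, -⟩, hlim⟩ := (isCompact_setOf_lipschitzWith_edist_le hX 1 a.1 r)
    |>.ultrafilter_le_nhds (U.map fun i => (u i).1) (le_principal_iff.2 hmem)
  exact ⟨⟨f, hf⟩, hlim⟩

lemma exists_lipschitzWith_tendsto {ι : Type*}
    (U : Ultrafilter ι) (γ : ι → ℝ → NonexpMap Y X) (hγ : ∀ i, LipschitzWith 1 (γ i))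
    (a : NonexpMap Y X) (hγa : ∀ i, γ i 0 = a) :
    ∃ ψ : ℝ → NonexpMap Y X, LipschitzWith 1 ψ ∧ ψ 0 = a ∧
      ∀ t, Tendsto (fun i => (γ i t).1) U (𝓝 (ψ t).1) := by
  have hbdd : ∀ t, ∀ i, edist (γ i t) a ≤ nndist t 0 := fun t i => by
    simpa [hγa i, edist_nndist] using (hγ i).edist_le_mul t 0
  choose ψ hψ using fun t =>
    exists_tendsto_of_eventually_edist_le hX U (fun i => γ i t) a _ (.of_forall (hbdd t))
  refine ⟨ψ, .of_edist_le fun s t => edist_le_of_tendsto (hψ s) (hψ t)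
    (.of_forall fun i => by simpa using (hγ i).edist_le_mul s t), ?_, hψ⟩
  exact Subtype.ext (tendsto_nhds_unique (hψ 0) (by simp [hγa]))

theorem exists_tendsto_intrinsicEDist_of_cauchy (u : ℕ → NonexpMap Y X)
    (hu : ∀ ε : ℝ≥0∞, 0 < ε → ∃ N, ∀ m n, N ≤ m → N ≤ n → intrinsicEDist (u m) (u n) < ε) :
    ∃ f : NonexpMap Y X, Tendsto (fun n => intrinsicEDist (u n) f) atTop (𝓝 0) := by
  let U := Ultrafilter.of (atTop : Filter ℕ)
  have hU : (U : Filter ℕ) ≤ atTop := Ultrafilter.of_le _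
  obtain ⟨N₁, hN₁⟩ := hu 1 one_pos
  obtain ⟨f, hf⟩ := exists_tendsto_of_eventually_edist_le hX U u (u N₁) 1 <|
    (eventually_ge_atTop N₁).filter_mono hU |>.mono fun n hn => by
      simpa using ((edist_le_intrinsicEDist _ _).trans_lt (hN₁ n N₁ hn le_rfl)).le
  refine ⟨f, ENNReal.tendsto_atTop_zero.2 fun ε hε => ?_⟩
  obtain ⟨r, hr, hrε⟩ := ENNReal.lt_iff_exists_nnreal_btwn.1 hε
  obtain ⟨N, hN⟩ := hu r hr
  refine ⟨N, fun m hm => le_trans ?_ hrε.le⟩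
  -- curves from `u m` to `u n` of length `< r`, all parametrised on `[0, r]`
  choose ℓ hℓ γ hγ hγ0 hγr using fun n =>
    exists_lipschitzWith_of_intrinsicEDist_lt (hN m (max n N) hm (le_max_right n N))
  obtain ⟨ψ, hψ, hψ0, hψlim⟩ := exists_lipschitzWith_tendsto hX U γ hγ (u m) hγ0
  have hψr : ψ r = f := by
    refine Subtype.ext (tendsto_nhds_unique (hψlim r) (hf.congr' ?_))
    filter_upwards [hU (eventually_ge_atTop N)] with n hn
    rw [hγr n r (by exact_mod_cast (ENNReal.coe_lt_coe.1 (hℓ n)).le), max_eq_left hn]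
  simpa [hψ0, hψr] using intrinsicEDist_le_of_lipschitzOnWith (ℓ := r) hψ.lipschitzOnWith

theorem exists_lipschitzOnWith_intrinsicEDist (f g : NonexpMap Y X)
    (hfg : intrinsicEDist f g ≠ ⊤) :
    ∃ φ : ℝ → NonexpMap Y X, LipschitzOnWith 1 φ (Icc 0 (intrinsicEDist f g).toReal) ∧
      φ 0 = f ∧ φ (intrinsicEDist f g).toReal = g := by
  set D := intrinsicEDist f g
  obtain ⟨c, -, hcD, hc⟩ := exists_seq_strictAnti_tendsto' hfg.lt_top
  choose ℓ hℓ γ hγ hγ0 hγℓ using fun n => exists_lipschitzWith_of_intrinsicEDist_lt (hcD n).1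
  have hDℓ : ∀ n, D ≤ ℓ n := fun n => by
    simpa [hγ0, hγℓ n _ le_rfl] using
      intrinsicEDist_le_of_lipschitzOnWith (ℓ := ℓ n) (hγ n).lipschitzOnWith
  have hℓD : Tendsto (fun n => (ℓ n : ℝ)) atTop (𝓝 D.toReal) := by
    have := tendsto_of_tendsto_of_tendsto_of_le_of_le tendsto_const_nhds hc hDℓ
      fun n => (hℓ n).le
    simpa [Function.comp_def] using (ENNReal.tendsto_toReal hfg).comp this
  -- `γ n D` is within `|ℓ n - D|` of `γ n (ℓ n) = g`
  have hγD : Tendsto (fun n => γ n D.toReal) atTop (𝓝 g) := by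
    rw [tendsto_iff_edist_tendsto_0]
    refine tendsto_of_tendsto_of_tendsto_of_le_of_le tendsto_const_nhds
      (by simpa using (tendsto_const_nhds (x := D.toReal)).edist hℓD) (fun _ => bot_le) fun n => ?_
    simpa [hγℓ n _ le_rfl] using (hγ n).edist_le_mul D.toReal (ℓ n)
  let U := Ultrafilter.of (atTop : Filter ℕ)
  obtain ⟨ψ, hψ, hψ0, hψlim⟩ := exists_lipschitzWith_tendsto hX U γ hγ f hγ0
  refine ⟨ψ, hψ.lipschitzOnWith, hψ0, Subtype.ext (tendsto_nhds_unique (hψlim _) ?_)⟩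
  exact (continuous_val.tendsto g).comp (hγD.mono_left (Ultrafilter.of_le _))

end

end NonexpMap

theorem nonexpMap_intrinsic_complete_convex_general {X Y : Type*} [EMetricSpace X]
    [EMetricSpace Y]
    (hX : ∀ (x : X) (r : ℝ≥0), IsCompact (EMetric.closedBall x (r : ℝ≥0∞))) :
    (∀ u : ℕ → NonexpMap Y X,
      (∀ ε : ℝ≥0∞, 0 < ε → ∃ N : ℕ, ∀ m n : ℕ, N ≤ m → N ≤ n →
        intrinsicEDist (u m) (u n) < ε) →
      ∃ f : NonexpMap Y X,
        Filter.Tendsto (fun n => intrinsicEDist (u n) f) Filter.atTop (nhds 0)) ∧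
    (∀ f g : NonexpMap Y X, intrinsicEDist f g ≠ ⊤ →
      ∃ φ : ℝ → NonexpMap Y X,
        LipschitzOnWith 1 φ (Set.Icc 0 (intrinsicEDist f g).toReal) ∧
        φ 0 = f ∧ φ (intrinsicEDist f g).toReal = g) :=
  ⟨NonexpMap.exists_tendsto_intrinsicEDist_of_cauchy hX,
    NonexpMap.exists_lipschitzOnWith_intrinsicEDist hX⟩

/-- Let `X` be a complete extended metric space with compact finite-radius closed balls and
`Y` any extended metric space.  The set `H` of nonexpansive maps `Y → X`, equipped with the
intrinsic metric `D = (d_sup)_ℓ` associated to the supremum metric, is a complete extended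
metric space, and it is convex: any `f, g ∈ H` with `D(f, g) < ∞` are joined by a
`1`-Lipschitz curve `[0, D(f, g)] → (H, d_sup)`. -/
theorem nonexpMap_intrinsic_complete_convex {X Y : Type*} [EMetricSpace X] [CompleteSpace X]
    [EMetricSpace Y]
    (hX : ∀ (x : X) (r : ℝ≥0), IsCompact (EMetric.closedBall x (r : ℝ≥0∞))) :
    (∀ u : ℕ → NonexpMap Y X,
      (∀ ε : ℝ≥0∞, 0 < ε → ∃ N : ℕ, ∀ m n : ℕ, N ≤ m → N ≤ n →
        intrinsicEDist (u m) (u n) < ε) →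
      ∃ f : NonexpMap Y X,
        Filter.Tendsto (fun n => intrinsicEDist (u n) f) Filter.atTop (nhds 0)) ∧
    (∀ f g : NonexpMap Y X, intrinsicEDist f g ≠ ⊤ →
      ∃ φ : ℝ → NonexpMap Y X,
        LipschitzOnWith 1 φ (Set.Icc 0 (intrinsicEDist f g).toReal) ∧
        φ 0 = f ∧ φ (intrinsicEDist f g).toReal = g) :=
  nonexpMap_intrinsic_complete_convex_general hX
end

section
/- Let 0 < C ≤ 1 and let j_i : Y → X_i (i ∈ I) be a family of nonexpansive, C-expansive maps between complete extended metric spaces. Assume each X_i is convex, Y is compact, and for every y,y' ∈ Y the infimum inf_{i ∈ I} d_{X_i}(j_i y, j_i y') is attained for some i ∈ I. Then the glued space ⊔_Y X_i is convex. -/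
/-
A near-optimal chain from `a` to `b` either stays in a single summand, where that summand's
convexity provides the cut point, or passes through `Y`. In the second case `D(a, b)` is the
infimum over `y, y'` of `d(a, j y) + δ(y, y') + d(j y', b)`, where `δ` is the chain distance on
`Y` generated by `ρ(y, y') = inf_i d(j_i y, j_i y')`; this expression is continuous, so by
compactness of `Y` the infimum is attained. The cut point then lies on the segment from `a` to
`j y` or from `j y'` to `b` (convexity of a summand), or else in the `Y`-part, where a step of a
near-optimal chain crossing the `δ`-sphere of radius `D / 2` about `y` is found, again by
compactness, and split either at a point of `Y` or inside a summand realizing `ρ` on that step.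
-/

open ENNReal NNReal

/-- The gluing pseudodistance on the disjoint union `Σ i, X i` associated to a family of maps
`j i : Y → X i`: the infimum of `∑ s, d (p s) (q s)` over all finite chains
`p 0 = a, q 0, p 1, q 1, …, p n, q n = b` in which each pair `p s, q s` lies in a single
summand `X (idx s)` and consecutive points `q s`, `p (s+1)` are images of a common point of
`Y` under the corresponding `j`. -/
noncomputable def glueDist {I Y : Type*} {X : I → Type*} [∀ i, EMetricSpace (X i)]
    (j : ∀ i, Y → X i) (a b : Σ i, X i) : ℝ≥0∞ :=
  sInf {L : ℝ≥0∞ | ∃ (n : ℕ) (idx : Fin (n + 1) → I) (p q : ∀ s, X (idx s)),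
    (⟨idx 0, p 0⟩ : Σ i, X i) = a ∧ (⟨idx (Fin.last n), q (Fin.last n)⟩ : Σ i, X i) = b ∧
    (∀ s : Fin n, ∃ y : Y,
      q s.castSucc = j (idx s.castSucc) y ∧ p s.succ = j (idx s.succ) y) ∧
    L = ∑ s, edist (p s) (q s)}

open Finset

theorem Nat.exists_le_lt_succ_of_le_of_lt {α : Type*} [LinearOrder α] {f : ℕ → α} {r : α}
    {m : ℕ} (h₀ : f 0 ≤ r) (hm : r < f m) : ∃ t < m, f t ≤ r ∧ r < f (t + 1) := by
  induction m with
  | zero => exact absurd h₀ (not_le.mpr hm)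
  | succ m ih =>
    by_cases h : r < f m
    · obtain ⟨t, htm, ht⟩ := ih h
      exact ⟨t, by omega, ht⟩
    · exact ⟨m, by omega, not_lt.mp h, hm⟩

theorem IsCompact.exists_le_of_forall_lt_add {α : Type*} [TopologicalSpace α] {K : Set α}
    (hK : IsCompact K) {f : α → ℝ≥0∞} (hf : ContinuousOn f K) {D : ℝ≥0∞}
    (h : ∀ ε : ℝ≥0∞, ε ≠ 0 → ∃ x ∈ K, f x < D + ε) : ∃ x ∈ K, f x ≤ D := by
  obtain ⟨x₀, hx₀, -⟩ := h 1 one_ne_zero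
  obtain ⟨x, hx, hmin⟩ := hK.exists_isMinOn ⟨x₀, hx₀⟩ hf
  refine ⟨x, hx, ENNReal.le_of_forall_pos_le_add fun ε hε _ => ?_⟩
  obtain ⟨x', hx', hlt⟩ := h ε (by exact_mod_cast hε.ne')
  exact (hmin hx').trans hlt.le

def IsStrictlyBetween {α : Type*} (d : α → α → ℝ≥0∞) (a c b : α) : Prop :=
  d a c ≠ 0 ∧ d c b ≠ 0 ∧ d a b = d a c + d c b

theorem isStrictlyBetween_of_le {α : Type*} {d : α → α → ℝ≥0∞} {a b c : α} {A B : ℝ≥0∞}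
    (htri : d a b ≤ d a c + d c b) (hac : d a c ≤ A) (hcb : d c b ≤ B) (hsum : A + B ≤ d a b)
    (hfin : d a b ≠ ⊤) (hA : A ≠ 0) (hB : B ≠ 0) : IsStrictlyBetween d a c b := by
  have hle : A + B ≤ d a c + d c b := hsum.trans htri
  have hAB : A + B ≠ ⊤ := ne_top_of_le_ne_top hfin hsum
  have hA' : A ≤ d a c :=
    ENNReal.le_of_add_le_add_right (ENNReal.add_ne_top.mp hAB).2 (hle.trans (by gcongr))
  have hB' : B ≤ d c b :=
    ENNReal.le_of_add_le_add_left (ENNReal.add_ne_top.mp hAB).1 (hle.trans (by gcongr))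
  refine ⟨(hA.bot_lt.trans_le hA').ne', (hB.bot_lt.trans_le hB').ne', le_antisymm htri ?_⟩
  calc d a c + d c b ≤ A + B := add_le_add hac hcb
    _ ≤ d a b := hsum

theorem continuous_of_le_edist_add_add {Y : Type*} [PseudoEMetricSpace Y] {f : Y → Y → ℝ≥0∞}
    (h : ∀ u v u' v', f u v ≤ edist u u' + f u' v' + edist v' v) :
    Continuous fun p : Y × Y => f p.1 p.2 := by
  refine continuous_of_le_add_edist 2 (by norm_num) fun p p' => ?_
  have h₁ : edist p.1 p'.1 ≤ edist p p' := by rw [Prod.edist_eq]; exact le_max_left _ _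
  have h₂ : edist p'.2 p.2 ≤ edist p p' := by
    rw [Prod.edist_eq, edist_comm p'.2]; exact le_max_right _ _
  calc f p.1 p.2 ≤ edist p.1 p'.1 + f p'.1 p'.2 + edist p'.2 p.2 := h _ _ _ _
    _ ≤ edist p p' + f p'.1 p'.2 + edist p p' := by gcongr
    _ = f p'.1 p'.2 + 2 * edist p p' := by ring

section ChainDist

variable {Y : Type*} (ρ : Y → Y → ℝ≥0∞)

noncomputable def chainDist (y y' : Y) : ℝ≥0∞ :=
  ⨅ (m : ℕ) (z : ℕ → Y) (_ : z 0 = y) (_ : z m = y'), ∑ t ∈ range m, ρ (z t) (z (t + 1))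

variable {ρ}

theorem chainDist_le_sum {m : ℕ} (z : ℕ → Y) :
    chainDist ρ (z 0) (z m) ≤ ∑ t ∈ range m, ρ (z t) (z (t + 1)) :=
  iInf_le_of_le m <| iInf_le_of_le z <| iInf_le_of_le rfl <| iInf_le _ rfl

theorem chainDist_self (y : Y) : chainDist ρ y y = 0 :=
  nonpos_iff_eq_zero.mp <| by simpa using chainDist_le_sum (ρ := ρ) (m := 0) fun _ => y

theorem chainDist_le (y y' : Y) : chainDist ρ y y' ≤ ρ y y' := by
  simpa using chainDist_le_sum (ρ := ρ) (m := 1) fun k => if k = 0 then y else y'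

theorem chainDist_triangle (y₁ y₂ y₃ : Y) :
    chainDist ρ y₁ y₃ ≤ chainDist ρ y₁ y₂ + chainDist ρ y₂ y₃ := by
  simp only [chainDist, ENNReal.iInf_add, ENNReal.add_iInf, le_iInf_iff]
  -- `simp` lists the binders of the chain from `y₂` to `y₃` first
  rintro m' z' hz' rfl m z rfl rfl
  set w : ℕ → Y := fun k => if k ≤ m then z k else z' (k - m)
  have hw : ∀ k ≤ m, w k = z k := fun k hk => if_pos hk
  have hw' : ∀ k, w (m + k) = z' k := by
    intro k
    rcases Nat.eq_zero_or_pos k with rfl | hk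
    · simpa using (hw m le_rfl).trans hz'.symm
    · exact (if_neg (by omega)).trans (by simp)
  calc chainDist ρ (z 0) (z' m') = chainDist ρ (w 0) (w (m + m')) := by rw [hw 0 m.zero_le, hw']
    _ ≤ ∑ t ∈ range (m + m'), ρ (w t) (w (t + 1)) := chainDist_le_sum w
    _ = _ := by
      rw [sum_range_add]
      congr 1
      · exact sum_congr rfl fun t ht => by
          rw [hw t (by simp at ht; omega), hw (t + 1) (by simp at ht; omega)]
      · exact sum_congr rfl fun t _ => by rw [hw', add_assoc, hw']

theorem chainDist_add_le_sum (z : ℕ → Y) {t m : ℕ} (ht : t < m) :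
    chainDist ρ (z 0) (z t) + ρ (z t) (z (t + 1)) + chainDist ρ (z (t + 1)) (z m) ≤
      ∑ k ∈ range m, ρ (z k) (z (k + 1)) := by
  obtain ⟨s, rfl⟩ := Nat.exists_eq_add_of_lt ht
  rw [show t + s + 1 = t + 1 + s by omega, sum_range_add, sum_range_succ]
  gcongr
  · exact chainDist_le_sum z
  · exact chainDist_le_sum (m := s) fun k => z (t + 1 + k)

theorem exists_sum_lt_of_chainDist_lt {y y' : Y} {c : ℝ≥0∞} (h : chainDist ρ y y' < c) :
    ∃ (m : ℕ) (z : ℕ → Y), z 0 = y ∧ z m = y' ∧ ∑ t ∈ range m, ρ (z t) (z (t + 1)) < c := by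
  simpa only [chainDist, iInf_lt_iff, exists_prop] using h

theorem continuous_chainDist [PseudoEMetricSpace Y]
    (hρ : ∀ y y', ρ y y' ≤ edist y y') : Continuous fun p : Y × Y => chainDist ρ p.1 p.2 :=
  continuous_of_le_edist_add_add fun u v u' v' => calc
    chainDist ρ u v ≤ chainDist ρ u u' + chainDist ρ u' v' + chainDist ρ v' v :=
      (chainDist_triangle _ v' _).trans (add_le_add (chainDist_triangle _ _ _) le_rfl)
    _ ≤ edist u u' + chainDist ρ u' v' + edist v' v := by
      gcongr <;> exact (chainDist_le _ _).trans (hρ _ _)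

theorem exists_chainDist_crossing [PseudoEMetricSpace Y] [CompactSpace Y]
    (hρ : ∀ y y', ρ y y' ≤ edist y y') (hρc : Continuous fun p : Y × Y => ρ p.1 p.2)
    {y y' : Y} {r : ℝ≥0∞} (hr : r < chainDist ρ y y') (hfin : chainDist ρ y y' ≠ ⊤) :
    ∃ u v, chainDist ρ y u ≤ r ∧ r ≤ chainDist ρ y v ∧
      chainDist ρ y u + ρ u v + chainDist ρ v y' ≤ chainDist ρ y y' := by
  have hδ := continuous_chainDist hρ
  have hS : IsClosed {p : Y × Y | chainDist ρ y p.1 ≤ r ∧ r ≤ chainDist ρ y p.2} :=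
    (isClosed_le (hδ.comp (continuous_const.prodMk continuous_fst)) continuous_const).inter
      (isClosed_le continuous_const (hδ.comp (continuous_const.prodMk continuous_snd)))
  have hcont : Continuous fun p : Y × Y => chainDist ρ y p.1 + ρ p.1 p.2 + chainDist ρ p.2 y' :=
    ((hδ.comp (continuous_const.prodMk continuous_fst)).add hρc).add
      (hδ.comp (continuous_snd.prodMk continuous_const))
  suffices h : ∀ ε ≠ 0, ∃ p ∈ {p : Y × Y | chainDist ρ y p.1 ≤ r ∧ r ≤ chainDist ρ y p.2},
      chainDist ρ y p.1 + ρ p.1 p.2 + chainDist ρ p.2 y' < chainDist ρ y y' + ε by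
    obtain ⟨⟨u, v⟩, ⟨hu, hv⟩, huv⟩ := hS.isCompact.exists_le_of_forall_lt_add hcont.continuousOn h
    exact ⟨u, v, hu, hv, huv⟩
  intro ε hε
  obtain ⟨m, z, rfl, rfl, hz⟩ := exists_sum_lt_of_chainDist_lt (ENNReal.lt_add_right hfin hε)
  obtain ⟨t, htm, ht, ht'⟩ := Nat.exists_le_lt_succ_of_le_of_lt
    (f := fun k => chainDist ρ (z 0) (z k)) ((chainDist_self (z 0)).trans_le (zero_le (a := r))) hr
  exact ⟨(z t, z (t + 1)), ⟨ht, ht'.le⟩, (chainDist_add_le_sum z htm).trans_lt hz⟩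

end ChainDist

section GlueChains

variable {I Y : Type*} {X : I → Type*} [∀ i, EMetricSpace (X i)] (j : ∀ i, Y → X i)

def glueChainLengths (a b : Σ i, X i) : Set ℝ≥0∞ :=
  {L : ℝ≥0∞ | ∃ (n : ℕ) (idx : Fin (n + 1) → I) (p q : ∀ s, X (idx s)),
    (⟨idx 0, p 0⟩ : Σ i, X i) = a ∧ (⟨idx (Fin.last n), q (Fin.last n)⟩ : Σ i, X i) = b ∧
    (∀ s : Fin n, ∃ y : Y,
      q s.castSucc = j (idx s.castSucc) y ∧ p s.succ = j (idx s.succ) y) ∧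
    L = ∑ s, edist (p s) (q s)}

theorem glueDist_eq_sInf (a b : Σ i, X i) : glueDist j a b = sInf (glueChainLengths j a b) :=
  rfl

theorem glueDist_le_edist (i : I) (x x' : X i) : glueDist j ⟨i, x⟩ ⟨i, x'⟩ ≤ edist x x' :=
  sInf_le ⟨0, fun _ => i, fun _ => x, fun _ => x', rfl, rfl, finZeroElim, by simp⟩

theorem glueDist_self (a : Σ i, X i) : glueDist j a a = 0 :=
  nonpos_iff_eq_zero.mp <| (glueDist_le_edist j a.1 a.2 a.2).trans_eq (edist_self _)

theorem glueDist_le_edist_add (i : I) (x x' : X i) (b : Σ i, X i) :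
    glueDist j ⟨i, x⟩ b ≤ edist x x' + glueDist j ⟨i, x'⟩ b := by
  rw [glueDist_eq_sInf, glueDist_eq_sInf, ENNReal.add_sInf]
  refine le_iInf₂ fun L ⟨n, idx, p, q, hp, hq, hjump, hL⟩ => ?_
  obtain ⟨rfl, hp⟩ := Sigma.mk.inj_iff.mp hp
  subst hp hL
  have hmem : ∑ s, edist (Function.update p 0 x s) (q s) ∈ glueChainLengths j ⟨idx 0, x⟩ b :=
    ⟨n, idx, Function.update p 0 x, q, by simp, hq,
      fun s => by simpa [Function.update_of_ne (Fin.succ_ne_zero s)] using hjump s, rfl⟩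
  refine (sInf_le hmem).trans ?_
  rw [Fin.sum_univ_succ, Fin.sum_univ_succ, ← add_assoc]
  simp only [Function.update_self, ne_eq, Fin.succ_ne_zero, not_false_eq_true,
    Function.update_of_ne]
  gcongr
  exact edist_triangle _ _ _

theorem glueDist_jump_le (i i' : I) (y : Y) (b : Σ i, X i) :
    glueDist j ⟨i, j i y⟩ b ≤ glueDist j ⟨i', j i' y⟩ b := by
  rw [glueDist_eq_sInf, glueDist_eq_sInf]
  refine le_sInf fun L ⟨n, idx, p, q, hp, hq, hjump, hL⟩ => ?_
  obtain ⟨rfl, hp⟩ := Sigma.mk.inj_iff.mp hp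
  subst hL
  let idx' : Fin (n + 2) → I := Fin.cons i idx
  refine sInf_le ⟨n + 1, idx', Fin.cons (α := fun s => X (idx' s)) (j i y) p,
    Fin.cons (α := fun s => X (idx' s)) (j i y) q, rfl, hq, Fin.cases ⟨y, rfl, ?_⟩ hjump, ?_⟩
  · rw [Fin.sum_univ_succ (n := n + 1)]
    show _ = edist (j i y) (j i y) + ∑ s, edist (p s) (q s)
    rw [edist_self, zero_add]
  · exact eq_of_heq hp

theorem glueDist_le_sum_add {n : ℕ} (idx : Fin (n + 1) → I) (p q : ∀ s, X (idx s))
    (hjump : ∀ s : Fin n, ∃ y : Y,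
      q s.castSucc = j (idx s.castSucc) y ∧ p s.succ = j (idx s.succ) y) (b : Σ i, X i) :
    glueDist j ⟨idx 0, p 0⟩ b ≤
      ∑ s, edist (p s) (q s) + glueDist j ⟨idx (Fin.last n), q (Fin.last n)⟩ b := by
  induction n with
  | zero => simpa using glueDist_le_edist_add j (idx 0) (p 0) (q 0) b
  | succ n ih =>
    obtain ⟨y, hq, hp⟩ := hjump 0
    have htail := ih (fun s => idx s.succ) (fun s => p s.succ) (fun s => q s.succ)
      (fun s => hjump s.succ)
    calc glueDist j ⟨idx 0, p 0⟩ b ≤ edist (p 0) (q 0) + glueDist j ⟨idx 0, q 0⟩ b :=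
          glueDist_le_edist_add j _ _ _ b
      _ ≤ edist (p 0) (q 0) + glueDist j ⟨idx 1, p 1⟩ b := by
          gcongr
          have hq : q 0 = j (idx 0) y := hq
          have hp : p 1 = j (idx 1) y := hp
          rw [hq, hp]
          exact glueDist_jump_le j _ _ y b
      _ ≤ _ := by
          rw [Fin.sum_univ_succ, add_assoc (edist _ _)]
          gcongr
          exact htail

theorem glueDist_triangle (a c b : Σ i, X i) :
    glueDist j a b ≤ glueDist j a c + glueDist j c b := by
  rw [glueDist_eq_sInf j a c, ENNReal.sInf_add]
  refine le_iInf₂ fun L ⟨n, idx, p, q, hp, hq, hjump, hL⟩ => ?_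
  subst hp hq hL
  exact glueDist_le_sum_add j idx p q hjump b

end GlueChains

section GlueThroughY

variable {I Y : Type*} {X : I → Type*} [∀ i, EMetricSpace (X i)] (j : ∀ i, Y → X i)

noncomputable def iInfEdist (y y' : Y) : ℝ≥0∞ :=
  ⨅ i, edist (j i y) (j i y')

noncomputable def glueDistVia (a b : Σ i, X i) (y y' : Y) : ℝ≥0∞ :=
  edist a.2 (j a.1 y) + chainDist (iInfEdist j) y y' + edist (j b.1 y') b.2

theorem glueDist_mk_j_eq_zero (i i' : I) (y : Y) : glueDist j ⟨i, j i y⟩ ⟨i', j i' y⟩ = 0 :=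
  nonpos_iff_eq_zero.mp <| (glueDist_jump_le j i i' y _).trans_eq (glueDist_self j _)

theorem glueDist_mk_j_le_iInfEdist (i i' : I) (y y' : Y) :
    glueDist j ⟨i, j i y⟩ ⟨i', j i' y'⟩ ≤ iInfEdist j y y' :=
  le_iInf fun k => calc
    glueDist j ⟨i, j i y⟩ ⟨i', j i' y'⟩ ≤ glueDist j ⟨k, j k y⟩ ⟨i', j i' y'⟩ :=
      glueDist_jump_le j i k y _
    _ ≤ edist (j k y) (j k y') + glueDist j ⟨k, j k y'⟩ ⟨i', j i' y'⟩ :=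
      glueDist_le_edist_add j k _ _ _
    _ = edist (j k y) (j k y') := by rw [glueDist_mk_j_eq_zero, add_zero]

theorem glueDist_mk_j_le_chainDist (i i' : I) (y y' : Y) :
    glueDist j ⟨i, j i y⟩ ⟨i', j i' y'⟩ ≤ chainDist (iInfEdist j) y y' := by
  refine le_iInf fun m => le_iInf fun z => le_iInf fun hz₀ => le_iInf fun hzm => ?_
  subst hz₀ hzm
  induction m generalizing i' with
  | zero => simp [glueDist_mk_j_eq_zero]
  | succ m ih =>
    calc glueDist j ⟨i, j i (z 0)⟩ ⟨i', j i' (z (m + 1))⟩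
        ≤ glueDist j ⟨i, j i (z 0)⟩ ⟨i', j i' (z m)⟩ +
          glueDist j ⟨i', j i' (z m)⟩ ⟨i', j i' (z (m + 1))⟩ := glueDist_triangle j _ _ _
      _ ≤ _ := by
        rw [sum_range_succ]
        exact add_le_add (ih i') (glueDist_mk_j_le_iInfEdist j _ _ _ _)

theorem glueDist_le_glueDistVia (a b : Σ i, X i) (y y' : Y) :
    glueDist j a b ≤ glueDistVia j a b y y' :=
  calc glueDist j a b
      ≤ glueDist j a ⟨a.1, j a.1 y⟩ + glueDist j ⟨a.1, j a.1 y⟩ ⟨b.1, j b.1 y'⟩ +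
        glueDist j ⟨b.1, j b.1 y'⟩ b :=
      (glueDist_triangle j _ ⟨b.1, j b.1 y'⟩ _).trans
        (add_le_add (glueDist_triangle j _ _ _) le_rfl)
    _ ≤ glueDistVia j a b y y' := by
      unfold glueDistVia
      gcongr
      · exact glueDist_le_edist j a.1 a.2 _
      · exact glueDist_mk_j_le_chainDist j _ _ _ _
      · exact glueDist_le_edist j b.1 _ b.2

theorem exists_glueDistVia_le_sum {n : ℕ} (idx : Fin (n + 2) → I) (p q : ∀ s, X (idx s))
    (hjump : ∀ s : Fin (n + 1), ∃ y : Y,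
      q s.castSucc = j (idx s.castSucc) y ∧ p s.succ = j (idx s.succ) y) :
    ∃ y y', glueDistVia j ⟨idx 0, p 0⟩ ⟨idx (Fin.last _), q (Fin.last _)⟩ y y' ≤
      ∑ s, edist (p s) (q s) := by
  choose w hq hp using hjump
  let z : ℕ → Y := fun k => w (Fin.ofNat (n + 1) k)
  have hz : ∀ s : Fin (n + 1), z s = w s := fun s => congrArg w (Fin.ext (Nat.mod_eq_of_lt s.2))
  refine ⟨w 0, w (Fin.last n), ?_⟩
  have hmid : chainDist (iInfEdist j) (w 0) (w (Fin.last n)) ≤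
      ∑ t : Fin n, edist (p t.castSucc.succ) (q t.castSucc.succ) := by
    calc chainDist (iInfEdist j) (w 0) (w (Fin.last n))
        = chainDist (iInfEdist j) (z 0) (z n) := by rw [← hz 0, ← hz (Fin.last n)]; rfl
      _ ≤ ∑ t ∈ range n, iInfEdist j (z t) (z (t + 1)) := chainDist_le_sum z
      _ = ∑ t : Fin n, iInfEdist j (w t.castSucc) (w t.succ) := by
        rw [← Fin.sum_univ_eq_sum_range]
        exact sum_congr rfl fun t _ => by rw [← hz t.castSucc, ← hz t.succ]; rfl
      _ ≤ _ := sum_le_sum fun t _ => by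
        rw [hp t.castSucc, Fin.succ_castSucc, hq t.succ]
        exact iInf_le _ _
  have h₀ : q 0 = j (idx 0) (w 0) := hq 0
  have hlast : p (Fin.last (n + 1)) = j (idx (Fin.last (n + 1))) (w (Fin.last n)) := by
    rw [← Fin.succ_last]
    exact hp _
  rw [Fin.sum_univ_succ, Fin.sum_univ_castSucc, Fin.succ_last]
  dsimp only [glueDistVia]
  rw [h₀, hlast, add_assoc (edist _ _)]
  gcongr

theorem mem_glueChainLengths_cases {a b : Σ i, X i} {L : ℝ≥0∞}
    (hL : L ∈ glueChainLengths j a b) :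
    (∃ i x x', a = ⟨i, x⟩ ∧ b = ⟨i, x'⟩ ∧ L = edist x x') ∨
      ∃ y y', glueDistVia j a b y y' ≤ L := by
  obtain ⟨n, idx, p, q, rfl, rfl, hjump, rfl⟩ := hL
  rcases n with _ | n
  · exact .inl ⟨idx 0, p 0, q 0, rfl, rfl, by simp⟩
  · exact .inr (exists_glueDistVia_le_sum j idx p q hjump)

theorem glueDist_cases {a b : Σ i, X i} (hfin : glueDist j a b ≠ ⊤) :
    (∃ i x x', a = ⟨i, x⟩ ∧ b = ⟨i, x'⟩ ∧ glueDist j a b = edist x x') ∨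
      ∀ ε ≠ 0, ∃ y y', glueDistVia j a b y y' < glueDist j a b + ε := by
  refine or_iff_not_imp_right.mpr fun h => ?_
  push Not at h
  obtain ⟨ε, hε, hvia⟩ := h
  have hdirect : ∀ η ≠ 0, η ≤ ε → ∃ i x x', a = ⟨i, x⟩ ∧ b = ⟨i, x'⟩ ∧
      edist x x' < glueDist j a b + η := by
    intro η hη hηε
    obtain ⟨L, hL, hLt⟩ := sInf_lt_iff.mp (ENNReal.lt_add_right hfin hη)
    rcases mem_glueChainLengths_cases j hL with ⟨i, x, x', ha, hb, rfl⟩ | ⟨y, y', hy⟩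
    · exact ⟨i, x, x', ha, hb, hLt⟩
    · exact absurd ((hvia y y').trans hy) (not_le.mpr (hLt.trans_le (add_le_add le_rfl hηε)))
  obtain ⟨i, x, x', rfl, rfl, -⟩ := hdirect ε hε le_rfl
  refine ⟨i, x, x', rfl, rfl, le_antisymm (glueDist_le_edist j i x x')
    (ENNReal.le_of_forall_pos_le_add fun η hη _ => ?_)⟩
  obtain ⟨i', w, w', ha, hb, hlt⟩ :=
    hdirect (min (η : ℝ≥0∞) ε) (by simp [hε, hη.ne']) (min_le_right _ _)
  obtain ⟨rfl, hw⟩ := Sigma.mk.inj_iff.mp ha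
  obtain ⟨-, hw'⟩ := Sigma.mk.inj_iff.mp hb
  cases eq_of_heq hw
  cases eq_of_heq hw'
  exact hlt.le.trans (add_le_add le_rfl (min_le_left _ _))

end GlueThroughY

section Continuity

variable {I Y : Type*} {X : I → Type*} [PseudoEMetricSpace Y] [∀ i, EMetricSpace (X i)]
  {j : ∀ i, Y → X i}

theorem iInfEdist_le_edist [Nonempty I] (hj : ∀ i, LipschitzWith 1 (j i)) (y y' : Y) :
    iInfEdist j y y' ≤ edist y y' :=
  (iInf_le _ (Classical.arbitrary I)).trans (by simpa using (hj _).edist_le_mul y y')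

theorem iInfEdist_le_edist_add_add (hj : ∀ i, LipschitzWith 1 (j i)) (u v u' v' : Y) :
    iInfEdist j u v ≤ edist u u' + iInfEdist j u' v' + edist v' v := by
  simp only [iInfEdist, ENNReal.add_iInf, ENNReal.iInf_add]
  refine le_iInf fun i => (iInf_le _ i).trans ?_
  calc edist (j i u) (j i v)
      ≤ edist (j i u) (j i u') + edist (j i u') (j i v') + edist (j i v') (j i v) :=
        edist_triangle4 _ _ _ _
    _ ≤ edist u u' + edist (j i u') (j i v') + edist v' v := by
      gcongr <;> simpa using (hj i).edist_le_mul _ _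

theorem continuous_glueDistVia [Nonempty I] (hj : ∀ i, LipschitzWith 1 (j i))
    (a b : Σ i, X i) : Continuous fun p : Y × Y => glueDistVia j a b p.1 p.2 :=
  ((continuous_const.edist ((hj a.1).continuous.comp continuous_fst)).add
    (continuous_chainDist (iInfEdist_le_edist hj))).add
    (((hj b.1).continuous.comp continuous_snd).edist continuous_const)

end Continuity

def IsMengerConvex (Z : Type*) [EMetricSpace Z] : Prop :=
  ∀ x x' : Z, x ≠ x' → edist x x' ≠ ⊤ → ∃ z, z ≠ x ∧ z ≠ x' ∧ edist x x' = edist x z + edist z x'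

section Convexity

variable {I Y : Type*} {X : I → Type*} [∀ i, EMetricSpace (X i)] {j : ∀ i, Y → X i}

theorem exists_isStrictlyBetween_of_summand {i : I} (hconv : IsMengerConvex (X i))
    {a b : Σ i, X i} {x x' : X i} (hxx' : x ≠ x') {A B : ℝ≥0∞}
    (ha : ∀ w, glueDist j a ⟨i, w⟩ ≤ A + edist x w)
    (hb : ∀ w, glueDist j ⟨i, w⟩ b ≤ edist w x' + B)
    (hsum : A + edist x x' + B ≤ glueDist j a b) (hfin : glueDist j a b ≠ ⊤) :
    ∃ c, IsStrictlyBetween (glueDist j) a c b := by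
  have hxx'fin : edist x x' ≠ ⊤ :=
    ne_top_of_le_ne_top hfin ((le_add_self.trans le_self_add).trans hsum)
  obtain ⟨z, hzx, hzx', hz⟩ := hconv x x' hxx' hxx'fin
  refine ⟨⟨i, z⟩, isStrictlyBetween_of_le (glueDist_triangle j _ _ _) (ha z) (hb z) ?_ hfin
    ?_ ?_⟩
  · calc A + edist x z + (edist z x' + B) = A + edist x x' + B := by rw [hz]; ring
      _ ≤ _ := hsum
  · exact fun h => hzx (edist_eq_zero.mp (add_eq_zero.mp h).2).symm
  · exact fun h => hzx' (edist_eq_zero.mp (add_eq_zero.mp h).1)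

variable [PseudoEMetricSpace Y] [CompactSpace Y] [Nonempty I]

/-- With `(u, v)` a step crossing the `δ`-sphere of radius `D / 2` about `y`, the cut point is `u`
itself if `ρ(u, v) = 0`, and otherwise an interior point of the segment from `j k u` to `j k v` in
a summand `X k` realizing `ρ(u, v)`. -/
theorem exists_isStrictlyBetween_of_chainDist_le (hj : ∀ i, LipschitzWith 1 (j i))
    (hinf : ∀ y y' : Y, ∃ i : I, edist (j i y) (j i y') = ⨅ i' : I, edist (j i' y) (j i' y'))
    (hconv : ∀ i, IsMengerConvex (X i)) {i i' : I} {y y' : Y}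
    (hδ : chainDist (iInfEdist j) y y' ≤ glueDist j ⟨i, j i y⟩ ⟨i', j i' y'⟩)
    (h0 : glueDist j ⟨i, j i y⟩ ⟨i', j i' y'⟩ ≠ 0)
    (hfin : glueDist j ⟨i, j i y⟩ ⟨i', j i' y'⟩ ≠ ⊤) :
    ∃ c, IsStrictlyBetween (glueDist j) ⟨i, j i y⟩ c ⟨i', j i' y'⟩ := by
  set D := glueDist j ⟨i, j i y⟩ ⟨i', j i' y'⟩
  have hδD : chainDist (iInfEdist j) y y' = D :=
    le_antisymm hδ (glueDist_mk_j_le_chainDist j _ _ _ _)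
  set r := D / 2
  have hr0 : r ≠ 0 := (ENNReal.half_pos h0).ne'
  have hrD : r < D := ENNReal.half_lt_self h0 hfin
  obtain ⟨u, v, hu, hv, huv⟩ := exists_chainDist_crossing (iInfEdist_le_edist hj)
    (continuous_of_le_edist_add_add (iInfEdist_le_edist_add_add hj)) (hδD ▸ hrD) (hδD ▸ hfin)
  rw [hδD] at huv
  set δ := chainDist (iInfEdist j)
  have hyv : δ y v ≤ δ y u + iInfEdist j u v :=
    (chainDist_triangle _ u _).trans (add_le_add le_rfl (chainDist_le _ _))
  by_cases huv0 : iInfEdist j u v = 0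
  · refine ⟨⟨i, j i u⟩, isStrictlyBetween_of_le (glueDist_triangle j _ _ _)
      (glueDist_mk_j_le_chainDist j _ _ _ _) ((glueDist_mk_j_le_chainDist j _ _ _ _).trans
        ((chainDist_triangle _ v _).trans (add_le_add (chainDist_le _ _) le_rfl)))
      (by rwa [← add_assoc]) hfin ?_ ?_⟩
    · rw [huv0, add_zero] at hyv
      exact (hr0.bot_lt.trans_le (hv.trans hyv)).ne'
    · intro h
      refine hrD.not_ge ?_
      calc D = δ y y' := hδD.symm
        _ ≤ δ y u + (iInfEdist j u v + δ v y') :=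
          (chainDist_triangle _ u _).trans (add_le_add le_rfl
            ((chainDist_triangle _ v _).trans (add_le_add (chainDist_le _ _) le_rfl)))
        _ ≤ r := by rw [h, add_zero]; exact hu
  · obtain ⟨k, hk⟩ := hinf u v
    refine exists_isStrictlyBetween_of_summand (hconv k) (x := j k u) (x' := j k v)
      (fun h => huv0 (by rw [iInfEdist, ← hk, h, edist_self])) (A := δ y u) (B := δ v y')
      (fun w => by simpa [glueDistVia] using glueDist_le_glueDistVia j ⟨i, j i y⟩ ⟨k, w⟩ y u)
      (fun w => by simpa [glueDistVia] using glueDist_le_glueDistVia j ⟨k, w⟩ ⟨i', j i' y'⟩ v y')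
      (hk ▸ huv) hfin

theorem exists_isStrictlyBetween_of_glueDistVia_le (hj : ∀ i, LipschitzWith 1 (j i))
    (hinf : ∀ y y' : Y, ∃ i : I, edist (j i y) (j i y') = ⨅ i' : I, edist (j i' y) (j i' y'))
    (hconv : ∀ i, IsMengerConvex (X i)) {a b : Σ i, X i} {y y' : Y}
    (hvia : glueDistVia j a b y y' ≤ glueDist j a b) (h0 : glueDist j a b ≠ 0)
    (hfin : glueDist j a b ≠ ⊤) : ∃ c, IsStrictlyBetween (glueDist j) a c b := by
  obtain ⟨ia, xa⟩ := a
  obtain ⟨ib, xb⟩ := b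
  by_cases hya : xa = j ia y
  · by_cases hyb : j ib y' = xb
    · subst hya hyb
      exact exists_isStrictlyBetween_of_chainDist_le hj hinf hconv
        (by simpa [glueDistVia] using hvia) h0 hfin
    · exact exists_isStrictlyBetween_of_summand (hconv ib) hyb
        (A := edist xa (j ia y) + chainDist (iInfEdist j) y y') (B := 0)
        (fun w => glueDist_le_glueDistVia j _ ⟨ib, w⟩ y y')
        (fun w => by simpa using glueDist_le_edist j ib w xb) (by simpa [glueDistVia] using hvia)
        hfin
  · exact exists_isStrictlyBetween_of_summand (hconv ia) hya
      (A := 0) (B := chainDist (iInfEdist j) y y' + edist (j ib y') xb)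
      (fun w => by simpa using glueDist_le_edist j ia xa w)
      (fun w => by
        simpa [glueDistVia, add_assoc] using glueDist_le_glueDistVia j ⟨ia, w⟩ ⟨ib, xb⟩ y y')
      (by simpa [glueDistVia, add_assoc] using hvia) hfin

end Convexity

theorem glue_convex_general {I Y : Type*} {X : I → Type*}
    [EMetricSpace Y] [CompactSpace Y]
    [∀ i, EMetricSpace (X i)]
    (j : ∀ i, Y → X i)
    (hne : ∀ i, LipschitzWith 1 (j i))
    (hconv : ∀ (i : I) (x x' : X i), x ≠ x' → edist x x' ≠ ⊤ →
      ∃ z : X i, z ≠ x ∧ z ≠ x' ∧ edist x x' = edist x z + edist z x')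
    (hinf : ∀ y y' : Y, ∃ i : I, edist (j i y) (j i y') = ⨅ i' : I, edist (j i' y) (j i' y')) :
    ∀ a b : Σ i, X i, glueDist j a b ≠ 0 → glueDist j a b ≠ ⊤ →
      ∃ c : Σ i, X i, glueDist j a c ≠ 0 ∧ glueDist j c b ≠ 0 ∧
        glueDist j a b = glueDist j a c + glueDist j c b := by
  intro a b h0 hfin
  have : Nonempty I := ⟨a.1⟩
  rcases glueDist_cases j hfin with ⟨i, x, x', rfl, rfl, hD⟩ | happrox
  · exact exists_isStrictlyBetween_of_summand (hconv i) (x := x) (x' := x')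
      (fun h => h0 (by rw [hD, h, edist_self]))
      (A := 0) (B := 0) (fun w => by simpa using glueDist_le_edist j i x w)
      (fun w => by simpa using glueDist_le_edist j i w x') (by simp [hD]) hfin
  · obtain ⟨⟨y, y'⟩, -, hvia⟩ := isCompact_univ.exists_le_of_forall_lt_add
      (continuous_glueDistVia hne a b).continuousOn fun ε hε =>
        let ⟨y, y', h⟩ := happrox ε hε
        ⟨(y, y'), trivial, h⟩
    exact exists_isStrictlyBetween_of_glueDistVia_le hne hinf hconv hvia h0 hfin

/-- If the `X i` are convex complete extended metric spaces, `Y` is compact, the maps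
`j i : Y → X i` are nonexpansive and `C`-expansive, and the infimum
`inf_i d_{X i}(j i y, j i y')` is always attained, then the glued space `⊔_Y X i` is
convex (stated on the disjoint union via the gluing pseudodistance, points of the quotient
being identified with points at pseudodistance `0`). -/
theorem glue_convex {I Y : Type*} {X : I → Type*}
    [EMetricSpace Y] [CompleteSpace Y] [CompactSpace Y]
    [∀ i, EMetricSpace (X i)] [∀ i, CompleteSpace (X i)]
    (C : ℝ≥0) (hC0 : 0 < C) (hC1 : C ≤ 1)
    (j : ∀ i, Y → X i)
    (hne : ∀ i, LipschitzWith 1 (j i))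
    (hexp : ∀ (i : I) (y y' : Y), (C : ℝ≥0∞) * edist y y' ≤ edist (j i y) (j i y'))
    (hconv : ∀ (i : I) (x x' : X i), x ≠ x' → edist x x' ≠ ⊤ →
      ∃ z : X i, z ≠ x ∧ z ≠ x' ∧ edist x x' = edist x z + edist z x')
    (hinf : ∀ y y' : Y, ∃ i : I, edist (j i y) (j i y') = ⨅ i' : I, edist (j i' y) (j i' y')) :
    ∀ a b : Σ i, X i, glueDist j a b ≠ 0 → glueDist j a b ≠ ⊤ →
      ∃ c : Σ i, X i, glueDist j a c ≠ 0 ∧ glueDist j c b ≠ 0 ∧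
        glueDist j a b = glueDist j a c + glueDist j c b :=
  glue_convex_general j hne hconv hinf
end
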